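/- Let 1 ≤ d₁ ≤ d₂ ≤ … ≤ dₙ be integers, and suppose there is an index i ∈ {1,…,n} such that d_i = k₁d₁ + k₂d₂ + … + k_{i−1}d_{i−1} for some nonnegative integers k₁,…,k_{i−1}. Then there exists a tame polynomial automorphism F of ℂⁿ with mdeg F = (d₁,…,dₙ). -/
import Mathlib

open MvPolynomial

/-- A polynomial automorphism of `ℂⁿ`, viewed as a `ℂ`-algebra automorphism of
`ℂ[x₁,…,xₙ]`, is *linear* if it sends each variable to a homogeneous polynomial
of degree `1` (i.e. it is induced by an invertible linear map). -/
def IsLinearAut {n : ℕ} (F : MvPolynomial (Fin n) ℂ ≃ₐ[ℂ] MvPolynomial (Fin n) ℂ) : Prop :=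
  ∀ i : Fin n, (F (X i)).IsHomogeneous 1

/-- A polynomial automorphism of `ℂⁿ` is *triangular* if it sends `x₁ ↦ x₁` and
`xᵢ ↦ xᵢ + fᵢ(x₁,…,x_{i-1})` for `i ≥ 2`, where each `fᵢ` only involves the
preceding variables. -/
def IsTriangularAut {n : ℕ} (F : MvPolynomial (Fin n) ℂ ≃ₐ[ℂ] MvPolynomial (Fin n) ℂ) : Prop :=
  (∀ i : Fin n, (i : ℕ) = 0 → F (X i) = X i) ∧
  ∀ i : Fin n, ∃ f : MvPolynomial (Fin n) ℂ,
    (∀ j ∈ f.vars, j < i) ∧ F (X i) = X i + f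

/-- A polynomial automorphism of `ℂⁿ` is *tame* if it lies in the subgroup of all
polynomial automorphisms generated by the linear and the triangular automorphisms. -/
def IsTame {n : ℕ} (F : MvPolynomial (Fin n) ℂ ≃ₐ[ℂ] MvPolynomial (Fin n) ℂ) : Prop :=
  F ∈ Subgroup.closure {G : MvPolynomial (Fin n) ℂ ≃ₐ[ℂ] MvPolynomial (Fin n) ℂ |
    IsLinearAut G ∨ IsTriangularAut G}

/-- The multidegree of a polynomial automorphism of `ℂⁿ`: the tuple of total degrees
of the images of the variables. -/
noncomputable def mdeg {n : ℕ} (F : MvPolynomial (Fin n) ℂ ≃ₐ[ℂ] MvPolynomial (Fin n) ℂ) :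
    Fin n → ℕ :=
  fun i => (F (X i)).totalDegree

lemma natDegree_aeval_le' {n : ℕ} (g : Fin n → Polynomial ℂ)
    (hg : ∀ m, (g m).natDegree ≤ 1) (p : MvPolynomial (Fin n) ℂ) :
    ((aeval g) p).natDegree ≤ p.totalDegree := by
  rw [MvPolynomial.aeval_def, MvPolynomial.eval₂_eq]
  apply Polynomial.natDegree_sum_le_of_forall_le
  intro s hs
  refine Polynomial.natDegree_mul_le.trans ?_
  have h1 : ((algebraMap ℂ (Polynomial ℂ)) (p.coeff s)).natDegree = 0 :=
    Polynomial.natDegree_C _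
  rw [h1, zero_add]
  refine (Polynomial.natDegree_prod_le _ _).trans ?_
  have h2 : ∀ m ∈ s.support, (g m ^ s m).natDegree ≤ s m := fun m _ =>
    Polynomial.natDegree_pow_le.trans (by nlinarith [hg m, (s m).zero_le])
  calc ∑ m ∈ s.support, (g m ^ s m).natDegree ≤ ∑ m ∈ s.support, s m :=
        Finset.sum_le_sum h2
    _ = s.sum (fun _ e => e) := rfl
    _ ≤ p.totalDegree := MvPolynomial.le_totalDegree hs

noncomputable def elemAut {n : ℕ} (t : Fin n → MvPolynomial (Fin n) ℂ)
    (h₁ : ∀ m, aeval (fun j => X j - t j) (t m) = t m)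
    (h₂ : ∀ m, aeval (fun j => X j + t j) (t m) = t m) :
    MvPolynomial (Fin n) ℂ ≃ₐ[ℂ] MvPolynomial (Fin n) ℂ :=
  AlgEquiv.ofAlgHom (aeval fun j => X j + t j) (aeval fun j => X j - t j)
    (by
      ext m
      simp only [AlgHom.coe_comp, Function.comp_apply, aeval_X, map_add, map_sub, h₂ m,
        AlgHom.coe_id, id_eq]
      ring_nf)
    (by
      ext m
      simp only [AlgHom.coe_comp, Function.comp_apply, aeval_X, map_add, map_sub, h₁ m,
        AlgHom.coe_id, id_eq]
      ring_nf)

lemma elemAut_apply_X {n : ℕ} (t : Fin n → MvPolynomial (Fin n) ℂ)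
    (h₁ : ∀ m, aeval (fun j => X j - t j) (t m) = t m)
    (h₂ : ∀ m, aeval (fun j => X j + t j) (t m) = t m) (m : Fin n) :
    elemAut t h₁ h₂ (X m) = X m + t m := by
  show (aeval fun j => X j + t j) (X m) = _
  simp

lemma totalDegree_X_add_X_pow {n : ℕ} (m z : Fin n) (e : ℕ) (hmz : m ≠ z) (he : 1 ≤ e) :
    (X m + X z ^ e : MvPolynomial (Fin n) ℂ).totalDegree = e := by
  apply le_antisymm
  · refine (totalDegree_add _ _).trans ?_
    simp [totalDegree_X, totalDegree_X_pow, he]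
  · have hc : coeff (Finsupp.single z e) (X m + X z ^ e : MvPolynomial (Fin n) ℂ) = 1 := by
      rw [coeff_add, coeff_X', coeff_X_pow, if_pos rfl, if_neg, zero_add]
      intro h
      have := DFunLike.congr_fun h m
      rw [Finsupp.single_apply, Finsupp.single_apply, if_pos rfl, if_neg (Ne.symm hmz)] at this
      exact one_ne_zero this
    have hs : Finsupp.single z e ∈ (X m + X z ^ e : MvPolynomial (Fin n) ℂ).support := by
      rw [MvPolynomial.mem_support_iff, hc]; exact one_ne_zero
    have := MvPolynomial.le_totalDegree hs
    rwa [Finsupp.sum_single_index rfl] at this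

lemma natDegree_X_add_X_pow (e : ℕ) (he : 1 ≤ e) :
    (Polynomial.X + Polynomial.X ^ e : Polynomial ℂ).natDegree = e := by
  apply le_antisymm
  · refine (Polynomial.natDegree_add_le _ _).trans ?_
    simp [Polynomial.natDegree_X_pow, he]
  · apply Polynomial.le_natDegree_of_ne_zero
    rw [Polynomial.coeff_add, Polynomial.coeff_X, Polynomial.coeff_X_pow, if_pos rfl]
    rcases eq_or_ne e 1 with h | h
    · rw [if_pos h.symm]; norm_num
    · rw [if_neg (fun hh => h hh.symm), zero_add]; exact one_ne_zero

theorem no_name (n : ℕ) (d : Fin n → ℕ) (hd1 : ∀ i, 1 ≤ d i) (hmono : Monotone d)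
    (i : Fin n) (k : Fin n → ℕ) (hk : d i = ∑ j ∈ Finset.Iio i, k j * d j) :
    ∃ F : MvPolynomial (Fin n) ℂ ≃ₐ[ℂ] MvPolynomial (Fin n) ℂ, IsTame F ∧ mdeg F = d := by
  classical
  have hn : 0 < n := i.pos
  set z : Fin n := ⟨0, hn⟩ with hz
  have hzle : ∀ m : Fin n, z ≤ m := fun m => by simp [Fin.le_def, hz]
  have hiz : i ≠ z := by
    intro h
    have hempty : Finset.Iio i = ∅ := by
      apply Finset.eq_empty_of_forall_notMem
      intro j hj
      rw [Finset.mem_Iio, h] at hj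
      exact absurd hj (by simp [Fin.lt_def, hz])
    rw [hempty, Finset.sum_empty] at hk
    have := hd1 i
    omega
  set π := Equiv.swap z i with hπ
  have hπz : π z = i := Equiv.swap_apply_left z i
  have hπi : π i = z := Equiv.swap_apply_right z i
  have hπj : ∀ j, j ≠ z → j ≠ i → π j = j := fun j h1 h2 =>
    Equiv.swap_apply_of_ne_of_ne h1 h2
  have hπjz : ∀ j ∈ Finset.Iio i, π j ≠ z := by
    intro j hj h
    exact absurd (π.injective (h.trans hπi.symm)) (ne_of_lt (Finset.mem_Iio.mp hj))
  -- the triangular pieces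
  set tT : Fin n → MvPolynomial (Fin n) ℂ :=
    fun m => if m = z then 0 else X z ^ (d (π m)) with htT
  set tE : Fin n → MvPolynomial (Fin n) ℂ :=
    fun m => if m = i then ∏ j ∈ Finset.Iio i, X j ^ k j else 0 with htE
  have hTaux : ∀ (u : Fin n → MvPolynomial (Fin n) ℂ), u z = X z →
      ∀ m, aeval u (tT m) = tT m := by
    intro u hu m
    by_cases hm : m = z
    · simp [htT, hm]
    · simp [htT, hm, map_pow, hu]
  have hEaux : ∀ (u : Fin n → MvPolynomial (Fin n) ℂ), (∀ j, j ≠ i → u j = X j) →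
      ∀ m, aeval u (tE m) = tE m := by
    intro u hu m
    by_cases hm : m = i
    · simp only [htE, hm, if_pos rfl, map_prod, map_pow, aeval_X]
      exact Finset.prod_congr rfl fun j hj => by
        rw [hu j (ne_of_lt (Finset.mem_Iio.mp hj))]
    · simp [htE, hm]
  have hT₁ : ∀ m, aeval (fun j => X j - tT j) (tT m) = tT m :=
    hTaux _ (by simp [htT])
  have hT₂ : ∀ m, aeval (fun j => X j + tT j) (tT m) = tT m :=
    hTaux _ (by simp [htT])
  have hE₁ : ∀ m, aeval (fun j => X j - tE j) (tE m) = tE m :=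
    hEaux _ (fun j hj => by simp [htE, hj])
  have hE₂ : ∀ m, aeval (fun j => X j + tE j) (tE m) = tE m :=
    hEaux _ (fun j hj => by simp [htE, hj])
  set T := elemAut tT hT₁ hT₂ with hTdef
  set E := elemAut tE hE₁ hE₂ with hEdef
  set P : MvPolynomial (Fin n) ℂ ≃ₐ[ℂ] MvPolynomial (Fin n) ℂ := renameEquiv ℂ π with hPdef
  have hTX : ∀ m, T (X m) = X m + tT m := elemAut_apply_X tT hT₁ hT₂
  have hEX : ∀ m, E (X m) = X m + tE m := elemAut_apply_X tE hE₁ hE₂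
  have hPX : ∀ m, P (X m) = X (π m) := fun m => rename_X π m
  refine ⟨T * P * E, ?_, ?_⟩
  · -- tameness
    have hTmem : IsTriangularAut T := by
      constructor
      · intro m hm
        have hmz : m = z := Fin.ext (by simpa [hz] using hm)
        rw [hTX, hmz]; simp [htT]
      · intro m
        refine ⟨tT m, ?_, hTX m⟩
        intro j hj
        by_cases hm : m = z
        · rw [htT] at hj; simp only [hm, if_pos rfl, vars_0] at hj
          exact absurd hj (Finset.notMem_empty j)
        · rw [htT] at hj; simp only [if_neg hm] at hj
          have : j ∈ (X z : MvPolynomial (Fin n) ℂ).vars := vars_pow _ _ hj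
          rw [vars_X] at this
          rw [Finset.mem_singleton] at this
          subst this
          exact lt_of_le_of_ne (hzle m) (Ne.symm hm)
    have hEmem : IsTriangularAut E := by
      constructor
      · intro m hm
        have hmz : m = z := Fin.ext (by simpa [hz] using hm)
        have hmi : m ≠ i := by rw [hmz]; exact Ne.symm hiz
        rw [hEX]; simp [htE, hmi]
      · intro m
        refine ⟨tE m, ?_, hEX m⟩
        intro j hj
        by_cases hm : m = i
        · rw [htE] at hj; simp only [hm, if_pos rfl] at hj
          obtain ⟨l, hl, hjl⟩ := Finset.mem_biUnion.mp (vars_prod _ hj)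
          have : j ∈ (X l : MvPolynomial (Fin n) ℂ).vars := vars_pow _ _ hjl
          rw [vars_X, Finset.mem_singleton] at this
          subst this
          rw [hm]
          exact Finset.mem_Iio.mp hl
        · rw [htE] at hj; simp only [if_neg hm, vars_0] at hj
          exact absurd hj (Finset.notMem_empty j)
    have hPmem : IsLinearAut P := by
      intro m
      rw [hPX]
      exact isHomogeneous_X ℂ (π m)
    exact Subgroup.mul_mem _
      (Subgroup.mul_mem _ (Subgroup.subset_closure (Or.inr hTmem))
        (Subgroup.subset_closure (Or.inl hPmem)))
      (Subgroup.subset_closure (Or.inr hEmem))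
  · -- multidegree
    funext m
    have hF : (T * P * E) (X m) = T (P (E (X m))) := by
      rw [AlgEquiv.mul_apply, AlgEquiv.mul_apply]
    show ((T * P * E) (X m)).totalDegree = d m
    rcases eq_or_ne m i with hm | hm
    · subst hm
      have FX : (T * P * E) (X m) =
          X z + ∏ j ∈ Finset.Iio m, (X (π j) + X z ^ (d j)) ^ (k j) := by
        rw [hF, hEX]
        simp only [htE, if_pos rfl]
        rw [map_add, map_prod, map_add, map_prod, hPX, hπi, hTX]
        simp only [htT, if_pos rfl, add_zero]
        congr 1
        refine Finset.prod_congr rfl fun j hj => ?_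
        rw [map_pow, map_pow, hPX, hTX]
        congr 2
        have hjj : π (π j) = j := Equiv.swap_apply_self z m j
        simp only [htT, if_neg (hπjz j hj), hjj]
      have hB : ∀ j ∈ Finset.Iio m, ((X (π j) + X z ^ (d j) :
          MvPolynomial (Fin n) ℂ)).totalDegree = d j := fun j hj =>
        totalDegree_X_add_X_pow _ _ _ (hπjz j hj) (hd1 j)
      have hupper : ((T * P * E) (X m)).totalDegree ≤ d m := by
        rw [FX]
        refine (totalDegree_add _ _).trans (max_le ?_ ?_)
        · rw [totalDegree_X]; exact hd1 m
        · refine (totalDegree_finset_prod _ _).trans ?_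
          rw [hk]
          exact Finset.sum_le_sum fun j hj =>
            (totalDegree_pow _ _).trans (by rw [hB j hj])
      have hlower : d m ≤ ((T * P * E) (X m)).totalDegree := by
        set g0 : Fin n → Polynomial ℂ := fun m => if m = z then Polynomial.X else 0
          with hg0def
        have hg0 : ∀ m, (g0 m).natDegree ≤ 1 := by
          intro m'; by_cases h : m' = z <;> simp [hg0def, h]
        have hφ : (aeval g0) ((T * P * E) (X m)) =
            Polynomial.X + Polynomial.X ^ (d m) := by
          rw [FX, map_add, aeval_X]
          rw [hg0def]
          simp only [if_pos rfl]
          congr 1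
          rw [map_prod]
          have hterm : ∀ j ∈ Finset.Iio m,
              (aeval fun m' => if m' = z then (Polynomial.X : Polynomial ℂ) else 0)
                ((X (π j) + X z ^ d j : MvPolynomial (Fin n) ℂ) ^ k j) = (Polynomial.X : Polynomial ℂ) ^ (k j * d j) := by
            intro j hj
            rw [map_pow, map_add, map_pow, aeval_X, aeval_X, if_neg (hπjz j hj),
              if_pos rfl, zero_add, ← pow_mul, mul_comm (d j)]
          rw [Finset.prod_congr rfl hterm, Finset.prod_pow_eq_pow_sum, ← hk]
        have := natDegree_aeval_le' g0 hg0 ((T * P * E) (X m))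
        rwa [hφ, natDegree_X_add_X_pow _ (hd1 m)] at this
      exact le_antisymm hupper hlower
    · have hEm : E (X m) = X m := by rw [hEX]; simp [htE, hm]
      rw [hF, hEm, hPX, hTX]
      by_cases hmz : m = z
      · subst hmz
        rw [hπz, htT]
        simp only [if_neg hiz, hπi]
        exact totalDegree_X_add_X_pow i z (d z) hiz (hd1 z)
      · rw [hπj m hmz hm, htT]
        simp only [if_neg hmz, hπj m hmz hm]
        exact totalDegree_X_add_X_pow m z (d m) hmz (hd1 m)
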